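/- Let X be a real Hilbert space, let m ≥ 2, and let T_1, …, T_m : X → X be firmly nonexpansive mappings such that for each i, 0 belongs to the closure of the range of Id − T_i. Then for every ε > 0 there exist c = (c_1, …, c_m) and x = (x_1, …, x_m) in X^m such that (Σ_{i=1}^m ‖c_i‖²)^{1/2} ≤ ε and, for every i ∈ {1, …, m}, x_i = c_i + T_i(x_{i−1}), where x_0 := x_m. -/

import Mathlib

open Filter Topology RealInnerProductSpace

section AuxCore

variable {X : Type*} [NormedAddCommGroup X] [InnerProductSpace ℝ X] [CompleteSpace X]

omit [CompleteSpace X] in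
private lemma firm_nonexp {T : X → X}
    (h : ∀ x y : X, ‖T x - T y‖ ^ 2 ≤ ⟪x - y, T x - T y⟫) (x y : X) :
    ‖T x - T y‖ ≤ ‖x - y‖ := by
  have h1 := h x y
  have h2 := real_inner_le_norm (x - y) (T x - T y)
  nlinarith [norm_nonneg (T x - T y), norm_nonneg (x - y)]

private def vecM {m : ℕ} {X : Type*} (f : Fin m → X) : PiLp 2 (fun _ : Fin m => X) := WithLp.toLp 2 f

@[simp]
private lemma vecM_apply {m : ℕ} {X : Type*} (f : Fin m → X) (i : Fin m) :
    vecM f i = f i := rfl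

set_option maxHeartbeats 1600000 in
private lemma shifted_core {m : ℕ} [NeZero m] (e : Fin m) (T : Fin m → X → X)
    (hfirm : ∀ i : Fin m, ∀ x y : X, ‖T i x - T i y‖ ^ 2 ≤ ⟪x - y, T i x - T i y⟫)
    (h0 : ∀ i : Fin m, (0 : X) ∈ closure (Set.range fun x : X => x - T i x))
    {ε : ℝ} (hε : 0 < ε) :
    ∃ u : Fin m → X,
      Real.sqrt (∑ i, ‖u i - T (i - e) (u (i - e))‖ ^ 2) ≤ ε := by
  classical
  haveI : CompleteSpace (PiLp 2 (fun _ : Fin m => X)) := inferInstance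
  haveI : Nonempty (PiLp 2 (fun _ : Fin m => X)) := ⟨0⟩
  -- step 1: approximate zeros of Id - T i
  set δ₀ : ℝ := ε / (12 * (m + 1)) with hδ₀def
  have hδ₀ : 0 < δ₀ := by positivity
  have hv : ∀ i : Fin m, ∃ vi : X, ‖vi - T i vi‖ < δ₀ := by
    intro i
    have h := h0 i
    rw [Metric.mem_closure_iff] at h
    obtain ⟨b, hbr, hb⟩ := h δ₀ hδ₀
    obtain ⟨x, rfl⟩ := hbr
    rw [dist_zero_left] at hb
    exact ⟨x, hb⟩
  choose v hvlt using hv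
  -- the vectors in the product space
  set pv : PiLp 2 (fun _ : Fin m => X) := vecM (fun i => T i (v i)) with hpv
  set av : PiLp 2 (fun _ : Fin m => X) := vecM (fun i => v i - T i (v i)) with hav
  set t0 : PiLp 2 (fun _ : Fin m => X) := vecM (fun i => T i 0) with ht0
  set P : ℝ := ‖pv‖ with hP
  set K : ℝ := ‖t0‖ with hK
  have hP0 : 0 ≤ P := norm_nonneg _
  have hK0 : 0 ≤ K := norm_nonneg _
  set δ' : ℝ := ‖av‖ with hδ'
  have hδ'0 : 0 ≤ δ' := norm_nonneg _
  have hδ'le : δ' ≤ ε / 12 := by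
    rw [hδ', PiLp.norm_eq_of_L2]
    have hsum : ∑ i, ‖av i‖ ^ 2 ≤ (ε / 12) ^ 2 := by
      have h1 : ∀ i : Fin m, ‖av i‖ ^ 2 ≤ δ₀ ^ 2 := by
        intro i
        have h2 := (hvlt i).le
        have h3 : av i = v i - T i (v i) := by rw [hav, vecM_apply]
        rw [h3]
        exact pow_le_pow_left₀ (norm_nonneg _) h2 2
      have hkey : (m : ℝ) * δ₀ ^ 2 ≤ (ε / 12) ^ 2 := by
        have hm2 : ((m : ℝ)) ≤ ((m : ℝ) + 1) ^ 2 := by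
          have := sq_nonneg ((m : ℝ))
          linarith
        have h2 : (0:ℝ) < (m : ℝ) + 1 := by positivity
        set q : ℝ := 1 / ((m : ℝ) + 1) with hq
        have hqq : q ^ 2 * ((m : ℝ) + 1) ^ 2 = 1 := by
          rw [hq]; field_simp
        have hq2 : (m : ℝ) * q ^ 2 ≤ 1 := by
          have h4 := mul_le_mul_of_nonneg_right hm2 (sq_nonneg q)
          calc (m:ℝ) * q ^ 2 ≤ ((m:ℝ) + 1) ^ 2 * q ^ 2 := h4
            _ = 1 := by linear_combination hqq
        have h5 := mul_le_mul_of_nonneg_left hq2 (sq_nonneg (ε / 12))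
        have h6 : δ₀ = ε / 12 * q := by
          rw [hδ₀def, hq]; field_simp
        calc (m : ℝ) * δ₀ ^ 2 = (ε / 12) ^ 2 * ((m : ℝ) * q ^ 2) := by rw [h6]; ring
          _ ≤ (ε / 12) ^ 2 * 1 := h5
          _ = (ε / 12) ^ 2 := mul_one _
      calc ∑ i, ‖av i‖ ^ 2 ≤ ∑ _i : Fin m, δ₀ ^ 2 := Finset.sum_le_sum fun i _ => h1 i
        _ = m * δ₀ ^ 2 := by
            simp [Finset.sum_const, Finset.card_univ, nsmul_eq_mul]
        _ ≤ (ε / 12) ^ 2 := hkey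
    calc Real.sqrt (∑ i, ‖av i‖ ^ 2) ≤ Real.sqrt ((ε / 12) ^ 2) := Real.sqrt_le_sqrt hsum
      _ = ε / 12 := Real.sqrt_sq (by positivity)
  set Cc : ℝ := δ' * P + P ^ 2 with hCc
  have hCc0 : 0 ≤ Cc := by positivity
  -- choice of lambda
  set lam : ℝ := min (min (ε / (36 * (P + 1))) (ε / (24 * (K + 1)))) (ε ^ 2 / (144 * (Cc + 1)))
    with hlam
  have hlam0 : 0 < lam := by
    apply lt_min (lt_min (by positivity) (by positivity)) (by positivity)
  have hlam1 : lam ≤ ε / (36 * (P + 1)) := le_trans (min_le_left _ _) (min_le_left _ _)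
  have hlam2 : lam ≤ ε / (24 * (K + 1)) := le_trans (min_le_left _ _) (min_le_right _ _)
  have hlam3 : lam ≤ ε ^ 2 / (144 * (Cc + 1)) := min_le_right _ _
  have hne1 : (1 + 2 * lam) ≠ 0 := by positivity
  clear_value δ₀ P K δ' Cc lam
  -- the contraction
  set G : PiLp 2 (fun _ : Fin m => X) → PiLp 2 (fun _ : Fin m => X) := (fun u => vecM (fun i =>
      ((1 + 2 * lam)⁻¹ : ℝ) • (T (i - e) (u (i - e)) - lam • T i (u i)))) with hG
  -- auxiliary norm facts
  have htle : ∀ u u' : PiLp 2 (fun _ : Fin m => X),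
      ‖vecM (fun i => T i (u i) - T i (u' i))‖ ≤ ‖u - u'‖ := by
    intro u u'
    rw [PiLp.norm_eq_of_L2, PiLp.norm_eq_of_L2]
    apply Real.sqrt_le_sqrt
    apply Finset.sum_le_sum
    intro i _
    have h1 : ‖T i (u i) - T i (u' i)‖ ≤ ‖u i - u' i‖ := firm_nonexp (hfirm i) (u i) (u' i)
    have h2 : ‖(u - u') i‖ = ‖u i - u' i‖ := by rw [PiLp.sub_apply]
    rw [h2]
    exact pow_le_pow_left₀ (norm_nonneg _) h1 2
  have hshiftnorm : ∀ w : PiLp 2 (fun _ : Fin m => X),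
      ‖vecM (fun i => w (i - e))‖ = ‖w‖ := by
    intro w
    rw [PiLp.norm_eq_of_L2, PiLp.norm_eq_of_L2]
    congr 1
    exact Fintype.sum_equiv (Equiv.subRight e) _ _ (fun i => rfl)
  have hGlip : ∀ u u' : PiLp 2 (fun _ : Fin m => X),
      ‖G u - G u'‖ ≤ ((1 + lam) / (1 + 2 * lam)) * ‖u - u'‖ := by
    intro u u'
    set t : PiLp 2 (fun _ : Fin m => X) := vecM (fun i => T i (u i) - T i (u' i)) with ht
    have hGsub : G u - G u' = ((1 + 2 * lam)⁻¹ : ℝ) •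
        (vecM (fun i => t (i - e)) - lam • t) := by
      ext i
      simp only [PiLp.sub_apply, PiLp.smul_apply, hG, ht, vecM_apply]
      module
    rw [hGsub, norm_smul]
    have h1 : ‖(vecM (fun i => t (i - e)) - lam • t)‖
        ≤ (1 + lam) * ‖u - u'‖ := by
      calc ‖(vecM (fun i => t (i - e)) - lam • t)‖
          ≤ ‖vecM (fun i => t (i - e))‖ + ‖lam • t‖ := norm_sub_le _ _
        _ = ‖t‖ + lam * ‖t‖ := by
            rw [hshiftnorm t, norm_smul, Real.norm_eq_abs, abs_of_pos hlam0]
        _ ≤ ‖u - u'‖ + lam * ‖u - u'‖ := by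
            have h2 := htle u u'
            rw [← ht] at h2
            have h3 := mul_le_mul_of_nonneg_left h2 hlam0.le
            linarith
        _ = (1 + lam) * ‖u - u'‖ := by ring
    have h2 : ‖((1 + 2 * lam)⁻¹ : ℝ)‖ = (1 + 2 * lam)⁻¹ := by
      rw [Real.norm_eq_abs, abs_of_pos (by positivity)]
    rw [h2]
    calc (1 + 2 * lam)⁻¹ * ‖vecM (fun i => t (i - e)) - lam • t‖
        ≤ (1 + 2 * lam)⁻¹ * ((1 + lam) * ‖u - u'‖) :=
          mul_le_mul_of_nonneg_left h1 (by positivity)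
      _ = ((1 + lam) / (1 + 2 * lam)) * ‖u - u'‖ := by ring
  -- Banach fixed point
  have hcontr : ContractingWith ⟨(1 + lam) / (1 + 2 * lam), by positivity⟩ G := by
    constructor
    · show (1 + lam) / (1 + 2 * lam) < 1
      show (1 + lam) / (1 + 2 * lam) < 1
      rw [div_lt_one (by positivity)]
      linarith
    · apply LipschitzWith.of_dist_le_mul
      intro u u'
      rw [dist_eq_norm, dist_eq_norm]
      exact hGlip u u'
  obtain ⟨u, hufix⟩ : ∃ u : PiLp 2 (fun _ : Fin m => X), G u = u :=
    ⟨_, hcontr.fixedPoint_isFixedPt⟩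
  -- the fixed point equation, coordinatewise
  set z : PiLp 2 (fun _ : Fin m => X) := vecM (fun i => T i (u i)) with hz
  set Sz : PiLp 2 (fun _ : Fin m => X) := vecM (fun i => T (i - e) (u (i - e))) with hSz
  have heq : ∀ i : Fin m, Sz i = (1 + 2 * lam) • u i + lam • z i := by
    intro i
    have h1 : G u i = u i := congrArg (fun w => w i) hufix
    rw [hG] at h1
    simp only [vecM_apply] at h1
    have h2 : (1 + 2 * lam) • (((1 + 2 * lam)⁻¹ : ℝ) • (T (i - e) (u (i - e)) - lam • T i (u i)))
        = (1 + 2 * lam) • u i := by rw [h1]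
    rw [smul_smul, mul_inv_cancel₀ hne1, one_smul] at h2
    have h3 : Sz i = T (i - e) (u (i - e)) := by rw [hSz, vecM_apply]
    have h4 : z i = T i (u i) := by rw [hz, vecM_apply]
    rw [h3, h4, ← h2]
    module
  have hSznorm : ‖Sz‖ = ‖z‖ := by
    have h1 : Sz = vecM (fun i => z (i - e)) := by
      ext i; rw [hSz, hz]; simp only [vecM_apply]
    rw [h1]
    exact hshiftnorm z
  -- norm of u is at most norm of z
  have huz : ‖u‖ ≤ ‖z‖ := by
    have h1 : u = ((1 + 2 * lam)⁻¹ : ℝ) • (Sz - lam • z) := by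
      ext i
      have h2 := heq i
      simp only [PiLp.smul_apply, PiLp.sub_apply]
      rw [h2, smul_sub, smul_add, smul_smul, smul_smul]
      rw [show (1 + 2*lam)⁻¹ * (1 + 2*lam) = 1 by field_simp]
      module
    rw [h1, norm_smul, Real.norm_eq_abs, abs_of_pos (by positivity : (0:ℝ) < (1 + 2*lam)⁻¹)]
    have h2 : ‖Sz - lam • z‖ ≤ (1 + lam) * ‖z‖ := by
      calc ‖Sz - lam • z‖ ≤ ‖Sz‖ + ‖lam • z‖ := norm_sub_le _ _
        _ = ‖z‖ + lam * ‖z‖ := by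
            rw [hSznorm, norm_smul, Real.norm_eq_abs, abs_of_pos hlam0]
        _ = (1 + lam) * ‖z‖ := by ring
    calc (1 + 2*lam)⁻¹ * ‖Sz - lam • z‖ ≤ (1 + 2*lam)⁻¹ * ((1 + lam) * ‖z‖) :=
          mul_le_mul_of_nonneg_left h2 (by positivity)
      _ ≤ ‖z‖ := by
          rw [inv_mul_le_iff₀ (by positivity)]
          have h4 := mul_le_mul_of_nonneg_right
            (show (1:ℝ) + lam ≤ 1 + 2 * lam by linarith) (norm_nonneg z)
          linarith
  -- key identity
  have hEv : (2 * lam) • u + lam • z + (u - z) + (z - Sz) = (0 : PiLp 2 (fun _ : Fin m => X)) := by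
    ext i
    simp only [PiLp.add_apply, PiLp.sub_apply, PiLp.smul_apply, PiLp.zero_apply, vecM_apply]
    rw [heq i]
    module
  set wv : PiLp 2 (fun _ : Fin m => X) := z - pv with hwv
  have hkey : (2 * lam) * ⟪u, wv⟫ + lam * ⟪z, wv⟫ + (⟪u, wv⟫ - ⟪z, wv⟫)
      + (⟪z, wv⟫ - ⟪Sz, wv⟫) = 0 := by
    have h1 : ⟪((2 * lam) • u + lam • z + (u - z) + (z - Sz) : PiLp 2 (fun _ : Fin m => X)),
        wv⟫ = 0 := by
      rw [hEv]; exact inner_zero_left wv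
    rw [inner_add_left, inner_add_left, inner_add_left, inner_sub_left, inner_sub_left,
      real_inner_smul_left, real_inner_smul_left] at h1
    linarith
  have hwvle : ‖wv‖ ≤ ‖z‖ + P := by
    rw [hwv, hP]; exact norm_sub_le _ _
  -- bound B1 : firm nonexpansiveness inequality
  have hB1 : ⟪u, wv⟫ - ⟪z, wv⟫ ≥ ⟪av, wv⟫ := by
    have h1 : (0:ℝ) ≤ ⟪(u - z - av : PiLp 2 (fun _ : Fin m => X)), wv⟫ := by
      rw [PiLp.inner_apply]
      apply Finset.sum_nonneg
      intro i _
      have h2 : (u - z - av : PiLp 2 (fun _ : Fin m => X)) i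
          = u i - T i (u i) - (v i - T i (v i)) := by
        simp only [PiLp.sub_apply]
        simp only [hz, hav, vecM_apply]
      have h3 : wv i = T i (u i) - T i (v i) := by
        rw [hwv]
        simp only [PiLp.sub_apply]
        simp only [hz, hpv, vecM_apply]
      rw [h2, h3]
      have h4 : u i - T i (u i) - (v i - T i (v i))
          = (u i - v i) - (T i (u i) - T i (v i)) := by abel
      rw [h4, inner_sub_left, real_inner_self_eq_norm_sq]
      linarith [hfirm i (u i) (v i)]
    rw [inner_sub_left, inner_sub_left] at h1
    linarith
  have hB2 : ⟪av, wv⟫ ≥ -(δ' * (‖z‖ + P)) := by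
    have h1 : -(‖av‖ * ‖wv‖) ≤ ⟪av, wv⟫ := neg_le_of_abs_le (abs_real_inner_le_norm _ _)
    have h2 : ‖av‖ * ‖wv‖ ≤ δ' * (‖z‖ + P) := by
      rw [hδ']
      exact mul_le_mul_of_nonneg_left hwvle (norm_nonneg _)
    linarith
  have hB3 : ⟪z, wv⟫ ≥ ‖z‖ ^ 2 - ‖z‖ * P := by
    rw [hwv, inner_sub_right, real_inner_self_eq_norm_sq]
    have h1 := real_inner_le_norm z pv
    rw [← hP] at h1
    linarith
  have hB4 : ⟪z, wv⟫ - ⟪Sz, wv⟫ ≥ -(P ^ 2 / 2) := by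
    have h0' : ⟪z, wv⟫ - ⟪Sz, wv⟫ = ⟪(z - Sz : PiLp 2 (fun _ : Fin m => X)), wv⟫ := by
      rw [inner_sub_left]
    have hd : ‖z - Sz‖ ^ 2 = 2 * ⟪(z - Sz : PiLp 2 (fun _ : Fin m => X)), z⟫ := by
      have h1 := norm_sub_sq_real z Sz
      rw [hSznorm] at h1
      rw [inner_sub_left, real_inner_self_eq_norm_sq]
      have h2 : ⟪Sz, z⟫ = ⟪z, Sz⟫ := real_inner_comm _ _
      linarith
    have h2 : ⟪(z - Sz : PiLp 2 (fun _ : Fin m => X)), wv⟫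
        = ⟪(z - Sz : PiLp 2 (fun _ : Fin m => X)), z⟫
          - ⟪(z - Sz : PiLp 2 (fun _ : Fin m => X)), pv⟫ := by
      rw [hwv, inner_sub_right]
    have h3 : ⟪(z - Sz : PiLp 2 (fun _ : Fin m => X)), pv⟫ ≤ ‖z - Sz‖ * P := by
      rw [hP]; exact real_inner_le_norm _ _
    rw [h0', h2]
    linarith [sq_nonneg (‖z - Sz‖ - P), hd, h3]
  have hB5 : ⟪u, wv⟫ ≥ -(‖u‖ * K) - ‖u‖ * P := by
    have h1 : ⟪u, wv⟫ = ⟪u, z⟫ - ⟪u, pv⟫ := by rw [hwv, inner_sub_right]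
    have h2 : ⟪u, z⟫ ≥ ⟪u, t0⟫ := by
      have h3 : ⟪u, z⟫ - ⟪u, t0⟫ = ⟪u, (z - t0 : PiLp 2 (fun _ : Fin m => X))⟫ := by
        rw [inner_sub_right]
      have h4 : (0:ℝ) ≤ ⟪u, (z - t0 : PiLp 2 (fun _ : Fin m => X))⟫ := by
        rw [PiLp.inner_apply]
        apply Finset.sum_nonneg
        intro i _
        have h5 : (z - t0 : PiLp 2 (fun _ : Fin m => X)) i = T i (u i) - T i 0 := by
          simp only [PiLp.sub_apply]; simp only [hz, ht0, vecM_apply]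
        rw [h5]
        have h6 := hfirm i (u i) 0
        rw [sub_zero] at h6
        linarith [h6, sq_nonneg (‖T i (u i) - T i 0‖)]
      linarith
    have h7 : ⟪u, t0⟫ ≥ -(‖u‖ * K) := by
      rw [hK]
      exact neg_le_of_abs_le (abs_real_inner_le_norm _ _)
    have h8 : ⟪u, pv⟫ ≤ ‖u‖ * P := by
      rw [hP]; exact real_inner_le_norm _ _
    linarith
  -- main quadratic bound
  have hmain : lam * ‖z‖ ^ 2 ≤ (3 * lam * P + 2 * lam * K + δ') * ‖z‖ + Cc := by
    have hzn : (0:ℝ) ≤ ‖z‖ := norm_nonneg _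
    have hun : (0:ℝ) ≤ ‖u‖ := norm_nonneg _
    have h1 : 2 * lam * (-(‖u‖ * K) - ‖u‖ * P) ≤ 2 * lam * ⟪u, wv⟫ :=
      mul_le_mul_of_nonneg_left hB5 (by positivity)
    have h2 : lam * (‖z‖ ^ 2 - ‖z‖ * P) ≤ lam * ⟪z, wv⟫ :=
      mul_le_mul_of_nonneg_left hB3 hlam0.le
    have h3 : ‖u‖ * K ≤ ‖z‖ * K := mul_le_mul_of_nonneg_right huz hK0
    have h4 : ‖u‖ * P ≤ ‖z‖ * P := mul_le_mul_of_nonneg_right huz hP0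
    have h5 : 2 * lam * (-(‖z‖ * K) - ‖z‖ * P) ≤ 2 * lam * (-(‖u‖ * K) - ‖u‖ * P) := by
      apply mul_le_mul_of_nonneg_left _ (by positivity : (0:ℝ) ≤ 2 * lam)
      linarith
    rw [hCc]
    linarith [hkey, hB1, hB2, hB4, h1, h2, h5, sq_nonneg P]
  -- deduce lam * ‖z‖ ≤ B + sqrt (lam * Cc)
  set B : ℝ := 3 * lam * P + 2 * lam * K + δ' with hB
  have hB0 : 0 ≤ B := by positivity
  set s : ℝ := Real.sqrt (lam * Cc) with hs
  have hs0 : 0 ≤ s := Real.sqrt_nonneg _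
  have hs2 : s ^ 2 = lam * Cc := Real.sq_sqrt (by positivity)
  have hzn : (0:ℝ) ≤ ‖z‖ := norm_nonneg _
  clear_value B s z Sz
  have htb : lam * ‖z‖ ≤ B + s := by
    have hmainB : lam * ‖z‖ ^ 2 ≤ B * ‖z‖ + Cc := hmain
    by_contra hcon
    push_neg at hcon
    have h1 : (lam * ‖z‖) ^ 2 ≤ B * (lam * ‖z‖) + lam * Cc := by
      have h2 := mul_le_mul_of_nonneg_left hmainB hlam0.le
      linarith [h2]
    have ht0' : (0:ℝ) < lam * ‖z‖ := lt_of_le_of_lt (by positivity) hcon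
    have p1 := mul_le_mul_of_nonneg_left hcon.le hs0
    have p2 := mul_pos ht0' (show (0:ℝ) < lam * ‖z‖ - B - s by linarith)
    linarith [h1, p1, p2, hs2, mul_nonneg hs0 hB0]
  -- final estimate
  refine ⟨u, ?_⟩
  have hfin : vecM (fun i => u i - T (i - e) (u (i - e))) = u - Sz := by
    ext i
    simp only [hSz, PiLp.sub_apply, vecM_apply]
  have hnorm : Real.sqrt (∑ i, ‖u i - T (i - e) (u (i - e))‖ ^ 2)
      = ‖vecM (fun i => u i - T (i - e) (u (i - e)))‖ := by
    rw [PiLp.norm_eq_of_L2]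
    simp only [vecM_apply]
  rw [hnorm, hfin]
  have husz : u - Sz = -((2 * lam) • u + lam • z) := by
    ext i
    simp only [PiLp.sub_apply, PiLp.neg_apply, PiLp.add_apply, PiLp.smul_apply]
    rw [heq i]
    module
  rw [husz, norm_neg]
  have h1 : ‖(2 * lam) • u + lam • z‖ ≤ 2 * lam * ‖u‖ + lam * ‖z‖ := by
    calc ‖(2 * lam) • u + lam • z‖ ≤ ‖(2 * lam) • u‖ + ‖lam • z‖ := norm_add_le _ _
      _ = 2 * lam * ‖u‖ + lam * ‖z‖ := by
          rw [norm_smul, norm_smul, Real.norm_eq_abs, Real.norm_eq_abs,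
            abs_of_pos (by positivity : (0:ℝ) < 2 * lam), abs_of_pos hlam0]
  have h2 : 2 * lam * ‖u‖ + lam * ‖z‖ ≤ 3 * (lam * ‖z‖) := by
    have h3 := mul_le_mul_of_nonneg_left huz (by positivity : (0:ℝ) ≤ 2 * lam)
    linarith
  -- numeric bounds
  have hb1 : 9 * lam * P ≤ ε / 4 := by
    have h3 : lam * (36 * (P + 1)) ≤ ε := by
      rw [← le_div_iff₀ (by positivity)]
      exact hlam1
    linarith [h3, mul_nonneg hlam0.le hP0, hlam0.le]
  have hb2 : 6 * lam * K ≤ ε / 4 := by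
    have h3 : lam * (24 * (K + 1)) ≤ ε := by
      rw [← le_div_iff₀ (by positivity)]
      exact hlam2
    linarith [h3, mul_nonneg hlam0.le hK0, hlam0.le]
  have hb3 : 3 * δ' ≤ ε / 4 := by linarith
  have hb4 : 3 * s ≤ ε / 4 := by
    have h3 : lam * (144 * (Cc + 1)) ≤ ε ^ 2 := by
      rw [← le_div_iff₀ (by positivity)]
      exact hlam3
    have h4 : lam * Cc ≤ (ε / 12) ^ 2 := by
      linarith [h3, mul_nonneg hlam0.le hCc0, hlam0.le]
    have h5 : s ≤ ε / 12 := by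
      rw [hs]
      calc Real.sqrt (lam * Cc) ≤ Real.sqrt ((ε / 12) ^ 2) := Real.sqrt_le_sqrt h4
        _ = ε / 12 := Real.sqrt_sq (by positivity)
    linarith
  calc ‖(2 * lam) • u + lam • z‖ ≤ 3 * (lam * ‖z‖) := le_trans h1 h2
    _ ≤ 3 * (B + s) := by linarith
    _ = 3 * B + 3 * s := by ring
    _ ≤ ε := by rw [hB]; linarith

end AuxCore

set_option maxHeartbeats 800000 in
theorem almost_fixed_points_of_shifted_system_additive_error
    {X : Type*} [NormedAddCommGroup X] [InnerProductSpace ℝ X] [CompleteSpace X]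
    {m : ℕ} (hm : 2 ≤ m) (T : Fin m → X → X)
    (hfirm : ∀ i : Fin m, ∀ x y : X, ‖T i x - T i y‖ ^ 2 ≤ ⟪x - y, T i x - T i y⟫)
    (h0 : ∀ i : Fin m, (0 : X) ∈ closure (Set.range fun x : X => x - T i x)) :
    ∀ ε > (0 : ℝ), ∃ c x : Fin m → X,
      Real.sqrt (∑ i, ‖c i‖ ^ 2) ≤ ε ∧
      ∀ i : Fin m, x i = c i + T i (x (i - ⟨1, by omega⟩)) := by
  intro ε hε
  haveI : NeZero m := ⟨by omega⟩
  have h1m : 1 < m := by omega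
  obtain ⟨u, hu⟩ := shifted_core (⟨1, h1m⟩ : Fin m) (fun i => T (i + ⟨1, h1m⟩))
    (fun i => hfirm (i + ⟨1, h1m⟩)) (fun i => h0 (i + ⟨1, h1m⟩)) hε
  refine ⟨fun i => u i - T i (u (i - ⟨1, h1m⟩)), u, ?_, ?_⟩
  · have hT : ∀ i : Fin m, T (i - ⟨1, h1m⟩ + ⟨1, h1m⟩) = T i := by
      intro i; rw [sub_add_cancel]
    have h2 : ∀ i : Fin m, ‖u i - T i (u (i - ⟨1, h1m⟩))‖ ^ 2
        = ‖u i - T (i - ⟨1, h1m⟩ + ⟨1, h1m⟩) (u (i - ⟨1, h1m⟩))‖ ^ 2 := by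
      intro i; rw [hT i]
    calc Real.sqrt (∑ i, ‖u i - T i (u (i - ⟨1, h1m⟩))‖ ^ 2)
        = Real.sqrt (∑ i, ‖u i - T (i - ⟨1, h1m⟩ + ⟨1, h1m⟩) (u (i - ⟨1, h1m⟩))‖ ^ 2) := by
          congr 1; exact Finset.sum_congr rfl fun i _ => h2 i
      _ ≤ ε := hu
  · intro i
    exact (sub_add_cancel (u i) (T i (u (i - ⟨1, h1m⟩)))).symm
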